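/- Assume f₁,…,f_k are linearly independent. Then the map P is the orthogonal projection of V onto W := (Sp[f₁,…,f_k])ᗮ along Sp[f₁,…,f_k]; that is, P(u) = 0 for every u ∈ Sp[f₁,…,f_k], and P(w) = w for every w ∈ W. Consequently P coincides with the orthogonal projection operator of V onto the subspace W. -/

import Mathlib

open scoped RealInnerProductSpace

/-- The matrix `Σ^{(a₁,…,a_r)}_{(b₁,…,b_s)}` whose `(p,q)` entry is `⟪b_q, a_p⟫`. -/
noncomputable def sigmaMat {V : Type*} [NormedAddCommGroup V] [InnerProductSpace ℝ V]
    {r s : ℕ} (a : Fin r → V) (b : Fin s → V) : Matrix (Fin r) (Fin s) ℝ :=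
  Matrix.of fun p q => ⟪b q, a p⟫

/-- The map `P`, given by the `(1/det Γ_f)`-scaled formal Laplace expansion along
the last row of the bordered Gram determinant whose last row consists of the
vectors `f₀,…,f_k,v` themselves. -/
noncomputable def Pmap {V : Type*} [NormedAddCommGroup V] [InnerProductSpace ℝ V]
    {k : ℕ} (f : Fin (k+1) → V) (v : V) : V :=
  (1 / (sigmaMat f f).det) •
    ((∑ i : Fin (k+1),
      ((-1 : ℝ) ^ ((i : ℕ) + k + 1) *
        (sigmaMat f (Fin.snoc (fun j => f (i.succAbove j)) v)).det) • f i)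
    + (sigmaMat f f).det • v)

/-!
Taking the inner product of `P v` with a vector `x` and expanding along the last row shows
that `det Γ_f · ⟪P v, x⟫` is the bordered Gram determinant with last row
`⟪f₁, x⟫, …, ⟪f_k, x⟫, ⟪v, x⟫`.
For `x = f_q` that row repeats row `q`, so `P v ⊥ Sp[f₁,…,f_k]`; and `P v - v` is visibly a
combination of the `f_i`. These two facts characterise the orthogonal projection of `v` onto
`Sp[f₁,…,f_k]ᗮ`; the values on `Sp[f₁,…,f_k]` and on its complement follow.
-/

theorem Fin.snoc_comp_castSucc_succAbove {α : Type*} {n : ℕ} (f : Fin (n + 1) → α) (a : α)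
    (i : Fin (n + 1)) :
    (Fin.snoc f a : Fin (n + 2) → α) ∘ i.castSucc.succAbove =
      Fin.snoc (fun j => f (i.succAbove j)) a := by
  ext q
  induction q using Fin.lastCases with
  | last => simp
  | cast j => simp

section BorderedGram

variable {V : Type*} [NormedAddCommGroup V] [InnerProductSpace ℝ V]

theorem sigmaMat_self_eq_gram {n : ℕ} (f : Fin n → V) : sigmaMat f f = Matrix.gram ℝ f := by
  ext p q
  exact real_inner_comm _ _

theorem det_sigmaMat_self_ne_zero {n : ℕ} {f : Fin n → V} (hf : LinearIndependent ℝ f) :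
    (sigmaMat f f).det ≠ 0 :=
  sigmaMat_self_eq_gram f ▸ (Matrix.posDef_gram_of_linearIndependent hf).det_pos.ne'

theorem det_sigmaMat_snoc_left {n : ℕ} (a : Fin (n + 1) → V) (x : V) (b : Fin (n + 2) → V) :
    (sigmaMat (Fin.snoc a x) b).det =
      ∑ j : Fin (n + 2),
        (-1) ^ (n + 1 + (j : ℕ)) * ⟪b j, x⟫ * (sigmaMat a (b ∘ j.succAbove)).det := by
  rw [Matrix.det_succ_row _ (Fin.last _)]
  refine Finset.sum_congr rfl fun j _ => ?_
  congr 2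
  · simp [sigmaMat]
  · ext p q
    simp [sigmaMat]

variable {k : ℕ} {f : Fin (k + 1) → V}

theorem inner_Pmap (hΓ : (sigmaMat f f).det ≠ 0) (v x : V) :
    ⟪Pmap f v, x⟫ = (sigmaMat (Fin.snoc f x) (Fin.snoc f v)).det / (sigmaMat f f).det := by
  rw [det_sigmaMat_snoc_left, Fin.sum_univ_castSucc]
  simp only [Fin.snoc_comp_castSucc_succAbove, Fin.succAbove_last, Fin.snoc_castSucc, Fin.snoc_last,
    Fin.val_castSucc, Fin.val_last, Fin.snoc_comp_castSucc,
    Even.neg_one_pow (⟨k + 1, rfl⟩ : Even (k + 1 + (k + 1))), one_mul]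
  rw [eq_div_iff hΓ, Pmap, real_inner_smul_left, mul_comm, ← mul_assoc, mul_one_div_cancel hΓ,
    one_mul, inner_add_left, sum_inner, real_inner_smul_left, mul_comm _ (sigmaMat f f).det]
  congr 1
  refine Finset.sum_congr rfl fun i _ => ?_
  rw [real_inner_smul_left]
  ring

theorem inner_Pmap_eq_zero (hΓ : (sigmaMat f f).det ≠ 0) (v : V) (q : Fin (k + 1)) :
    ⟪Pmap f v, f q⟫ = 0 := by
  rw [inner_Pmap hΓ, Matrix.det_zero_of_row_eq (Fin.castSucc_lt_last q).ne, zero_div]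
  ext c
  simp [sigmaMat]

theorem Pmap_mem_orthogonal (hΓ : (sigmaMat f f).det ≠ 0) (v : V) :
    Pmap f v ∈ (Submodule.span ℝ (Set.range f))ᗮ := by
  have hortho : Submodule.span ℝ (Set.range f) ⟂ ℝ ∙ Pmap f v := by
    rw [Submodule.isOrtho_span]
    rintro _ ⟨q, rfl⟩ _ rfl
    rw [real_inner_comm, inner_Pmap_eq_zero hΓ]
  exact hortho.ge (Submodule.mem_span_singleton_self _)

theorem Pmap_sub_self_mem_span (hΓ : (sigmaMat f f).det ≠ 0) (v : V) :
    Pmap f v - v ∈ Submodule.span ℝ (Set.range f) := by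
  rw [Pmap, smul_add, smul_smul, one_div, inv_mul_cancel₀ hΓ, one_smul, add_sub_cancel_right]
  exact Submodule.smul_mem _ _ <| Submodule.sum_mem _ fun i _ =>
    Submodule.smul_mem _ _ (Submodule.subset_span ⟨i, rfl⟩)

theorem Pmap_eq_starProjection [FiniteDimensional ℝ V] (hΓ : (sigmaMat f f).det ≠ 0)
    (v : V) : Pmap f v = (Submodule.span ℝ (Set.range f))ᗮ.starProjection v := by
  refine (Submodule.eq_starProjection_of_mem_orthogonal (Pmap_mem_orthogonal hΓ v) ?_).symm
  rw [← neg_mem_iff, neg_sub]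
  exact Submodule.le_orthogonal_orthogonal _ (Pmap_sub_self_mem_span hΓ v)

end BorderedGram

theorem stmt_11 {V : Type*} [NormedAddCommGroup V] [InnerProductSpace ℝ V]
    [FiniteDimensional ℝ V] (k : ℕ) (f : Fin (k+1) → V)
    (hf : LinearIndependent ℝ f) :
    (∀ u ∈ Submodule.span ℝ (Set.range f), Pmap f u = 0) ∧
    (∀ w ∈ (Submodule.span ℝ (Set.range f))ᗮ, Pmap f w = w) ∧
    (∀ v : V, Pmap f v =
      (Submodule.orthogonalProjectionOnto ((Submodule.span ℝ (Set.range f))ᗮ) v : V)) := by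
  have hP := Pmap_eq_starProjection (det_sigmaMat_self_ne_zero hf)
  refine ⟨fun u hu => ?_, fun w hw => ?_, hP⟩
  · rw [hP, Submodule.starProjection_apply_eq_zero_iff]
    exact Submodule.le_orthogonal_orthogonal _ hu
  · rw [hP, Submodule.starProjection_eq_self_iff.mpr hw]
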